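/- arXiv:math/0405191 — 4 statements merged into one kernel-verified Lean document; each statement's English description precedes it below -/
import Mathlib

section
/- A permutation π of [1, n+m] is an (n,m)-annular non-crossing permutation if and only if π satisfies: (connectedness) at least one cycle of π contains elements both from [1,n] and from [n+1,n+m], and (geodesic/planarity condition) #(π) + #(π⁻¹γ) = n + m, where γ = (1,2,...,n)(n+1,...,n+m) and #(σ) denotes the number of cycles of σ. In particular, any π satisfying the geodesic condition together with connectedness has genus zero in the sense that #(π) + #(π⁻¹γ) + #(γ) = (n+m) + 2(1 - g) with g = 0. -/
/-- The number of cycles of a permutation, counting fixed points as cycles of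
length one. -/
def cycleCount {α : Type*} [Fintype α] [DecidableEq α] (σ : Equiv.Perm α) : ℕ :=
  (Fintype.card α - σ.support.card) + σ.cycleType.card

/-- The permutation `γ = γ_{n,m}` of `[1, n+m]` with two cycles
`(1,2,…,n)(n+1,…,n+m)`. -/
def annGamma (n m : ℕ) : Equiv.Perm (Fin (n + m)) :=
  Equiv.permCongr finSumFinEquiv (Equiv.Perm.sumCongr (finRotate n) (finRotate m))

/-- `σ ∨ γ = 1`: the group generated by `σ` and `γ` acts transitively. -/
def JoinTrivial {N : ℕ} (σ γ : Equiv.Perm (Fin N)) : Prop :=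
  ∀ x y : Fin N, y ∈ MulAction.orbit (Subgroup.closure ({σ, γ} : Set (Equiv.Perm (Fin N)))) x

/-- Membership in `S_NC(n,m)`: `σ ∨ γ = 1` and genus zero, i.e.
`#(σ) + #(σ⁻¹γ) + #(γ) = (n+m) + 2·(1 - 0)`. -/
def IsAnnularNCPerm (n m : ℕ) (σ : Equiv.Perm (Fin (n + m))) : Prop :=
  JoinTrivial σ (annGamma n m) ∧
    cycleCount σ + cycleCount (σ⁻¹ * annGamma n m) + cycleCount (annGamma n m) = (n + m) + 2

/-- Connectedness: at least one cycle of `π` contains elements of both `[1,n]`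
and `[n+1,n+m]`. -/
def AnnConnected (n m : ℕ) (π : Equiv.Perm (Fin (n + m))) : Prop :=
  ∃ i j : Fin (n + m), (i : ℕ) < n ∧ n ≤ (j : ℕ) ∧ π.SameCycle i j

/-! The rotation `γ` maps each of the blocks `[1,n]` and `[n+1,n+m]` to itself and acts
transitively on each, so `⟨π, γ⟩` is transitive exactly when `π` does not preserve the
blocks, i.e. when some cycle of `π` meets both. Since `#(γ) = 2`, the genus-zero identity
is the geodesic condition. -/

open Equiv Equiv.Perm MulAction
open scoped Pointwise

section CycleCount

variable {α β : Type*} [Fintype α] [DecidableEq α] [Fintype β] [DecidableEq β]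

lemma cycleCount_eq_card_sub_sum_add_card (σ : Perm α) :
    cycleCount σ = Fintype.card α - σ.cycleType.sum + Multiset.card σ.cycleType := by
  rw [cycleCount, sum_cycleType]

lemma Equiv.Perm.cycleType_permCongr (e : α ≃ β) (σ : Perm α) :
    (e.permCongr σ).cycleType = σ.cycleType := by
  have : e.permCongr σ = σ.extendDomain (e.trans (subtypeUnivEquiv fun _ => trivial).symm) := by
    ext b; simp [permCongr_apply, extendDomain_apply_subtype]
  rw [this, cycleType_extendDomain]

lemma Equiv.Perm.cycleType_sumCongr (σ : Perm α) (τ : Perm β) :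
    (sumCongr σ τ).cycleType = σ.cycleType + τ.cycleType := by
  have hσ : sumCongr σ (1 : Perm β) = σ.extendDomain sumIsLeft.symm := by
    ext (a | b)
    · exact (extendDomain_apply_image σ sumIsLeft.symm a).symm
    · simp [extendDomain_apply_not_subtype]
  have hτ : sumCongr (1 : Perm α) τ = τ.extendDomain sumIsRight.symm := by
    ext (a | b)
    · simp [extendDomain_apply_not_subtype]
    · exact (extendDomain_apply_image τ sumIsRight.symm b).symm
  have hdisj : (sumCongr σ (1 : Perm β)).Disjoint (sumCongr 1 τ) := by
    rintro (a | b) <;> simp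
  rw [← mul_one σ, ← one_mul τ, ← sumCongr_mul, hdisj.cycleType_mul, hσ, hτ,
    cycleType_extendDomain, cycleType_extendDomain, mul_one, one_mul]

lemma cycleCount_permCongr (e : α ≃ β) (σ : Perm α) :
    cycleCount (e.permCongr σ) = cycleCount σ := by
  rw [cycleCount_eq_card_sub_sum_add_card, cycleCount_eq_card_sub_sum_add_card,
    cycleType_permCongr, Fintype.card_congr e]

lemma cycleCount_sumCongr (σ : Perm α) (τ : Perm β) :
    cycleCount (Perm.sumCongr σ τ) = cycleCount σ + cycleCount τ := by
  have := sum_cycleType_le σ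
  have := sum_cycleType_le τ
  simp only [cycleCount_eq_card_sub_sum_add_card, cycleType_sumCongr, Fintype.card_sum,
    Multiset.sum_add, Multiset.card_add]
  omega

end CycleCount

lemma cycleCount_finRotate {n : ℕ} (hn : 1 ≤ n) : cycleCount (finRotate n) = 1 := by
  obtain ⟨k, rfl⟩ := Nat.exists_eq_add_of_le' hn
  cases k with
  | zero =>
    rw [Subsingleton.elim (finRotate 1) 1]
    simp [cycleCount_eq_card_sub_sum_add_card]
  | succ k => simp [cycleCount_eq_card_sub_sum_add_card, cycleType_finRotate]

lemma cycleCount_annGamma {n m : ℕ} (hn : 1 ≤ n) (hm : 1 ≤ m) :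
    cycleCount (annGamma n m) = 2 := by
  rw [annGamma, cycleCount_permCongr, cycleCount_sumCongr, cycleCount_finRotate hn,
    cycleCount_finRotate hm]

lemma Equiv.Perm.SameCycle.of_semiconj {α β : Type*} [Finite α] {σ : Perm α} {τ : Perm β}
    {φ : α → β} (hφ : Function.Semiconj φ σ τ) {x y : α} (h : σ.SameCycle x y) :
    τ.SameCycle (φ x) (φ y) := by
  obtain ⟨k, -, rfl⟩ := h.exists_nat_pow_eq
  exact ⟨k, by simp only [zpow_natCast, coe_pow, (hφ.iterate_right k).eq]⟩

lemma Equiv.Perm.SameCycle.mem_orbit {α : Type*} {H : Subgroup (Perm α)} {σ : Perm α}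
    (hσ : σ ∈ H) {x y : α} (h : σ.SameCycle x y) : y ∈ orbit H x := by
  obtain ⟨k, rfl⟩ := h
  exact ⟨⟨σ ^ k, H.zpow_mem hσ k⟩, Eq.refl _⟩

section Annulus

variable {n m : ℕ}

def leftBlock (n m : ℕ) : Set (Fin (n + m)) := {x | (x : ℕ) < n}

@[simp]
lemma castAdd_mem_leftBlock (a : Fin n) : Fin.castAdd m a ∈ leftBlock n m := a.isLt

@[simp]
lemma natAdd_notMem_leftBlock (b : Fin m) : Fin.natAdd n b ∉ leftBlock n m := by
  simp [leftBlock]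

lemma semiconj_castAdd_finRotate_annGamma :
    Function.Semiconj (Fin.castAdd m) (finRotate n) (annGamma n m) := fun a => by
  simp [annGamma, permCongr_apply]

lemma semiconj_natAdd_finRotate_annGamma :
    Function.Semiconj (Fin.natAdd n) (finRotate m) (annGamma n m) := fun b => by
  simp [annGamma, permCongr_apply]

lemma annGamma_mem_stabilizer_leftBlock :
    annGamma n m ∈ stabilizer (Perm (Fin (n + m))) (leftBlock n m) := by
  rw [mem_stabilizer_set]
  intro x
  induction x using Fin.addCases with
  | left a => simp [← semiconj_castAdd_finRotate_annGamma.eq]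
  | right b => simp [← semiconj_natAdd_finRotate_annGamma.eq]

lemma sameCycle_finRotate (a b : Fin n) : (finRotate n).SameCycle a b := by
  rcases lt_or_ge n 2 with hn | hn
  · have : Subsingleton (Fin n) := Fin.subsingleton_iff_le_one.mpr (by omega)
    exact Subsingleton.elim a b ▸ SameCycle.refl _ _
  · have hsupp := support_finRotate_of_le hn
    exact (isCycle_finRotate_of_le hn).sameCycle (mem_support.1 (hsupp ▸ Finset.mem_univ a))
      (mem_support.1 (hsupp ▸ Finset.mem_univ b))

lemma sameCycle_annGamma {x y : Fin (n + m)} (h : x ∈ leftBlock n m ↔ y ∈ leftBlock n m) :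
    (annGamma n m).SameCycle x y := by
  induction x using Fin.addCases with
  | left a =>
    induction y using Fin.addCases with
    | left b => exact (sameCycle_finRotate a b).of_semiconj semiconj_castAdd_finRotate_annGamma
    | right b => simp at h
  | right a =>
    induction y using Fin.addCases with
    | left b => simp at h
    | right b => exact (sameCycle_finRotate a b).of_semiconj semiconj_natAdd_finRotate_annGamma

lemma annConnected_iff_notMem_stabilizer (π : Perm (Fin (n + m))) :
    AnnConnected n m π ↔ π ∉ stabilizer (Perm (Fin (n + m))) (leftBlock n m) := by
  constructor
  · rintro ⟨i, j, hi, hj, k, rfl⟩ hπ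
    exact hj.not_gt ((mem_stabilizer_set.1 (Subgroup.zpow_mem _ hπ k) i).2 hi)
  · intro hπ
    obtain ⟨x, hx⟩ := not_forall.1 (mt mem_stabilizer_set.2 hπ)
    by_cases hxL : x ∈ leftBlock n m
    · exact ⟨x, π x, hxL, not_lt.1 fun h => hx (iff_of_true h hxL),
        sameCycle_apply_right.2 (SameCycle.refl _ _)⟩
    · exact ⟨π x, x, not_not.1 fun h => hx (iff_of_false h hxL), not_lt.1 hxL,
        (sameCycle_apply_right.2 (SameCycle.refl _ _)).symm⟩

lemma joinTrivial_annGamma_iff_annConnected (hn : 1 ≤ n) (hm : 1 ≤ m)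
    (π : Perm (Fin (n + m))) :
    JoinTrivial π (annGamma n m) ↔ AnnConnected n m π := by
  set H := Subgroup.closure ({π, annGamma n m} : Set (Perm (Fin (n + m))))
  have hπH : π ∈ H := Subgroup.subset_closure (by simp)
  have hγH : annGamma n m ∈ H := Subgroup.subset_closure (by simp)
  rw [annConnected_iff_notMem_stabilizer]
  constructor
  · intro hJ hπ
    have hH : H ≤ stabilizer (Perm (Fin (n + m))) (leftBlock n m) := by
      rw [Subgroup.closure_le, Set.insert_subset_iff, Set.singleton_subset_iff]
      exact ⟨hπ, annGamma_mem_stabilizer_leftBlock⟩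
    obtain ⟨g, hg⟩ := hJ ⟨0, by omega⟩ ⟨n, by omega⟩
    have hgL := (mem_stabilizer_set.1 (hH g.2) (⟨0, by omega⟩ : Fin (n + m))).2 hn
    rw [← Subgroup.smul_def, show g • _ = _ from hg] at hgL
    exact lt_irrefl n hgL
  · intro hπ
    obtain ⟨x, hx⟩ := not_forall.1 (mt mem_stabilizer_set.2 hπ)
    have hπx : π • x ∈ orbit H x := mem_orbit x (⟨π, hπH⟩ : H)
    have hreach : ∀ z, z ∈ orbit H x := by
      intro z
      -- `x` and `π x` lie in different blocks, so `z` shares a block with one of them.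
      by_cases hz : x ∈ leftBlock n m ↔ z ∈ leftBlock n m
      · exact (sameCycle_annGamma hz).mem_orbit hγH
      · rw [← orbit_eq_iff.2 hπx]
        exact (sameCycle_annGamma (by tauto)).mem_orbit hγH
    intro y z
    change z ∈ orbit H y
    rw [orbit_eq_iff.2 (hreach y)]
    exact hreach z

end Annulus

/-- a permutation `π` of `[1,n+m]` is an `(n,m)`-annular non-crossing
permutation if and only if it is connected and satisfies the geodesic condition
`#(π) + #(π⁻¹γ) = n + m`. -/
theorem annular_noncrossing_iff_connected_geodesic (n m : ℕ) (hn : 1 ≤ n) (hm : 1 ≤ m)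
    (π : Equiv.Perm (Fin (n + m))) :
    IsAnnularNCPerm n m π ↔
      (AnnConnected n m π ∧
        cycleCount π + cycleCount (π⁻¹ * annGamma n m) = n + m) := by
  rw [IsAnnularNCPerm, cycleCount_annGamma hn hm, joinTrivial_annGamma_iff_annConnected hn hm]
  exact and_congr_right fun _ => by omega
end

section
/- The map a ↦ c(aΩ) from the algebra A(H_R) generated by the operators ω(f) into the cyclic Fock space is tracial: for all a, b ∈ A(H_R), c(abΩ) = c(baΩ). -/
noncomputable def creOp {H : Type*} [NormedAddCommGroup H] [InnerProductSpace ℂ H] (f : H) :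
    Module.End ℂ (TensorAlgebra ℂ H) :=
  LinearMap.mulLeft ℂ (TensorAlgebra.ι ℂ f)

noncomputable def omegaOp {H : Type*} [NormedAddCommGroup H] [InnerProductSpace ℂ H]
    (conj : H → H) (ann : H → Module.End ℂ (TensorAlgebra ℂ H)) (f : H) :
    Module.End ℂ (TensorAlgebra ℂ H) :=
  creOp f + ann (conj f)

/-!
Put `ω_R(f) = r(f) + r*(f̄)`, where `r(f)` is creation on the right and `r*` is the annihilator
conjugated by the reversal of tensors. By direct computation on pure tensors, `ω_R(f)` commutes
with every `ω(g)`; on the vacuum this is the symmetry of `(f, g) ↦ ⟨f̄, g⟩`. The recursion for `c`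
together with the rotation invariance of circular tensors gives `c ∘ ω(f) = c ∘ ω_R(f)`. Since
`ω(f)Ω = f = ω_R(f)Ω`, for every word `w` in the `ω`'s
`c(w ω(f) Ω) = c(w ω_R(f) Ω) = c(ω_R(f) w Ω) = c(ω(f) w Ω)`,
so `c(· Ω)` is invariant under rotation of words, and the trace property follows by bilinearity.
-/

namespace CyclicFock

theorem toSubmodule_adjoin_range_eq_span_prod_map {R A ι : Type*} [CommSemiring R]
    [Semiring A] [Algebra R A] (φ : ι → A) :
    Subalgebra.toSubmodule (Algebra.adjoin R (Set.range φ)) =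
      Submodule.span R (Set.range fun L : List ι => (L.map φ).prod) := by
  rw [Algebra.adjoin_eq_span, ← FreeMonoid.mrange_lift, MonoidHom.coe_mrange,
    ← FreeMonoid.ofList.surjective.range_comp]
  congr 1
  exact congrArg Set.range (funext fun L => FreeMonoid.lift_apply φ (FreeMonoid.ofList L))

theorem map_mul_comm_of_mem_span {R A V : Type*} [CommSemiring R] [Semiring A] [Algebra R A]
    [AddCommMonoid V] [Module R V] (τ : A →ₗ[R] V) {s : Set A}
    (h : ∀ x ∈ s, ∀ y ∈ s, τ (x * y) = τ (y * x)) :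
    ∀ x ∈ Submodule.span R s, ∀ y ∈ Submodule.span R s, τ (x * y) = τ (y * x) := by
  let B : A →ₗ[R] A →ₗ[R] V := (LinearMap.mul R A).compr₂ τ
  have hleft : ∀ x ∈ s, ∀ y ∈ Submodule.span R s, B x y = B.flip x y := fun x hx =>
    LinearMap.eqOn_span' (f := B x) (g := B.flip x) (h x hx)
  intro x hx y hy
  exact LinearMap.eqOn_span' (f := B.flip y) (g := B y) (fun x hx => hleft x hx y hy) hx

variable {R M : Type*} [CommSemiring R] [AddCommMonoid M] [Module R M]

variable (R) in
noncomputable def pureTensor (L : List M) : TensorAlgebra R M :=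
  (L.map (TensorAlgebra.ι R)).prod

@[simp] theorem pureTensor_nil : pureTensor R ([] : List M) = 1 := rfl

theorem pureTensor_cons (m : M) (L : List M) :
    pureTensor R (m :: L) = TensorAlgebra.ι R m * pureTensor R L := by
  simp [pureTensor]

theorem pureTensor_append (L L' : List M) :
    pureTensor R (L ++ L') = pureTensor R L * pureTensor R L' := by
  simp [pureTensor]

theorem pureTensor_concat (L : List M) (m : M) :
    pureTensor R (L ++ [m]) = pureTensor R L * TensorAlgebra.ι R m := by
  simp [pureTensor]

noncomputable def reverse : TensorAlgebra R M →ₗ[R] TensorAlgebra R M :=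
  (MulOpposite.opLinearEquiv R).symm.toLinearMap ∘ₗ
    (TensorAlgebra.lift R
      ((MulOpposite.opLinearEquiv R).toLinearMap ∘ₗ TensorAlgebra.ι R)).toLinearMap

theorem reverse_pureTensor (L : List M) : reverse (pureTensor R L) = pureTensor R L.reverse := by
  induction L with
  | nil => simp [reverse]
  | cons m L ih => simp_all [reverse, pureTensor_cons, pureTensor_append]

theorem span_range_pureTensor :
    Submodule.span R (Set.range (pureTensor R (M := M))) = ⊤ := by
  have h := toSubmodule_adjoin_range_eq_span_prod_map (R := R) (TensorAlgebra.ι R (M := M))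
  rwa [TensorAlgebra.adjoin_range_ι, Algebra.top_toSubmodule, eq_comm] at h

theorem linearMap_ext_pureTensor {N : Type*} [AddCommMonoid N] [Module R N]
    {T₁ T₂ : TensorAlgebra R M →ₗ[R] N}
    (h : ∀ L, T₁ (pureTensor R L) = T₂ (pureTensor R L)) : T₁ = T₂ :=
  LinearMap.ext_on_range span_range_pureTensor h

section Semicircular

variable {H : Type*} [NormedAddCommGroup H] [InnerProductSpace ℂ H]
  (conj : H → H) (ann : H → Module.End ℂ (TensorAlgebra ℂ H))

noncomputable def rightAnn (g : H) : Module.End ℂ (TensorAlgebra ℂ H) :=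
  reverse ∘ₗ ann g ∘ₗ reverse

noncomputable def omegaRight (f : H) : Module.End ℂ (TensorAlgebra ℂ H) :=
  LinearMap.mulRight ℂ (TensorAlgebra.ι ℂ f) + rightAnn ann (conj f)

noncomputable def omegaWord (L : List H) : Module.End ℂ (TensorAlgebra ℂ H) :=
  (L.map (omegaOp conj ann)).prod

variable {conj ann}

theorem omegaOp_one (hann0 : ∀ g, ann g 1 = 0) (f : H) :
    omegaOp conj ann f 1 = pureTensor ℂ [f] := by
  simp [omegaOp, creOp, hann0, pureTensor]

theorem omegaOp_pureTensor_cons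
    (hann : ∀ g f₁ x, ann g (TensorAlgebra.ι ℂ f₁ * x) = (inner ℂ g f₁ : ℂ) • x)
    (f m : H) (L : List H) :
    omegaOp conj ann f (pureTensor ℂ (m :: L)) =
      pureTensor ℂ (f :: m :: L) + (inner ℂ (conj f) m : ℂ) • pureTensor ℂ L := by
  simp only [omegaOp, creOp, LinearMap.add_apply, LinearMap.mulLeft_apply, pureTensor_cons, hann]

theorem omegaRight_one (hann0 : ∀ g, ann g 1 = 0) (f : H) :
    omegaRight conj ann f 1 = pureTensor ℂ [f] := by
  simp [omegaRight, rightAnn, reverse, hann0, pureTensor]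

theorem omegaRight_pureTensor
    (hann : ∀ g f₁ x, ann g (TensorAlgebra.ι ℂ f₁ * x) = (inner ℂ g f₁ : ℂ) • x)
    (f : H) {L : List H} (hL : L ≠ []) :
    omegaRight conj ann f (pureTensor ℂ L) =
      pureTensor ℂ (L ++ [f]) +
        (inner ℂ (conj f) (L.getLast hL) : ℂ) • pureTensor ℂ L.dropLast := by
  obtain ⟨M, e, rfl⟩ : ∃ M e, L = M ++ [e] := ⟨_, _, (List.dropLast_append_getLast hL).symm⟩
  have hrev : reverse (pureTensor ℂ (M ++ [e])) =
      TensorAlgebra.ι ℂ e * pureTensor ℂ M.reverse := by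
    rw [reverse_pureTensor, List.reverse_concat, pureTensor_cons]
  rw [omegaRight, LinearMap.add_apply, LinearMap.mulRight_apply, ← pureTensor_concat, rightAnn,
    LinearMap.comp_apply, LinearMap.comp_apply, hrev, hann, map_smul, reverse_pureTensor,
    List.reverse_reverse, List.getLast_concat, List.dropLast_concat]

variable (hann0 : ∀ g, ann g 1 = 0)
  (hann : ∀ g f₁ x, ann g (TensorAlgebra.ι ℂ f₁ * x) = (inner ℂ g f₁ : ℂ) • x)
  (hsym : ∀ f g : H, (inner ℂ (conj f) g : ℂ) = (inner ℂ (conj g) f : ℂ))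
include hann0 hann hsym

theorem commute_omegaOp_omegaRight (g f : H) :
    Commute (omegaOp conj ann g) (omegaRight conj ann f) := by
  refine linearMap_ext_pureTensor fun L => ?_
  simp only [Module.End.mul_apply]
  rcases L with _ | ⟨m, _ | ⟨n, N⟩⟩
  · simp [omegaOp_one hann0, omegaRight_one hann0, omegaOp_pureTensor_cons hann,
      omegaRight_pureTensor hann, hsym g f]
  · simp only [ne_eq, List.cons_ne_self, not_false_eq_true, omegaRight_pureTensor hann,
      List.cons_append, List.nil_append, List.getLast_singleton, List.dropLast_singleton,
      pureTensor_nil, map_add, omegaOp_pureTensor_cons hann, map_smul, omegaOp_one hann0,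
      reduceCtorEq, List.getLast_cons, List.dropLast_cons_cons, omegaRight_one hann0]
    abel
  · simp only [ne_eq, reduceCtorEq, not_false_eq_true, omegaRight_pureTensor hann,
      List.cons_append, List.getLast_cons, List.dropLast_cons_cons, map_add,
      omegaOp_pureTensor_cons hann, map_smul, smul_add]
    module

variable {V : Type*} [AddCommGroup V] [Module ℂ V] {cycT : List H → V}
  (hcycrot : ∀ f fs, cycT (fs ++ [f]) = cycT (f :: fs))
  {c : TensorAlgebra ℂ H →ₗ[ℂ] V}
  (hcrec : ∀ f fs, c (pureTensor ℂ (f :: fs)) = cycT (f :: fs) +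
    (inner ℂ (conj ((f :: fs).getLast (List.cons_ne_nil f fs))) f : ℂ) •
      c (pureTensor ℂ fs.dropLast))
include hcycrot hcrec

theorem comp_omegaOp_eq_comp_omegaRight (f : H) :
    c ∘ₗ omegaOp conj ann f = c ∘ₗ omegaRight conj ann f := by
  refine linearMap_ext_pureTensor fun L => ?_
  rcases L with _ | ⟨m, M⟩
  · simp [omegaOp_one hann0, omegaRight_one hann0]
  · -- Both sides expand into a circular tensor and two contractions; the circular tensors agree
    -- by rotation, and the contractions of `f` against the two ends match by `hsym`.
    have hcons := hcrec f (m :: M)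
    have hconcat := hcrec m (M ++ [f])
    simp only [LinearMap.coe_comp, Function.comp_apply, omegaOp_pureTensor_cons hann, map_add,
      hcons, ne_eq, reduceCtorEq, not_false_eq_true, List.getLast_cons, map_smul,
      omegaRight_pureTensor hann, List.cons_append, hconcat, List.append_eq_nil_iff,
      List.cons_ne_self, and_false, List.getLast_append_of_ne_nil, List.getLast_singleton,
      List.dropLast_append_of_ne_nil, List.dropLast_singleton, List.append_nil]
    rw [← List.cons_append, hcycrot, hsym f ((m :: M).getLast (List.cons_ne_nil m M))]
    abel

theorem map_omegaWord_rotate (L : List H) (f : H) :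
    c (omegaWord conj ann (L ++ [f]) 1) = c (omegaWord conj ann (f :: L) 1) := by
  have hcomm : Commute (omegaRight conj ann f) (omegaWord conj ann L) :=
    Commute.list_prod_right _ _ fun _ hx => by
      obtain ⟨g, -, rfl⟩ := List.mem_map.mp hx
      exact (commute_omegaOp_omegaRight hann0 hann hsym g f).symm
  calc c (omegaWord conj ann (L ++ [f]) 1)
      = c (omegaWord conj ann L (omegaRight conj ann f 1)) := by
        simp [omegaWord, omegaOp_one hann0, omegaRight_one hann0]
    _ = c (omegaRight conj ann f (omegaWord conj ann L 1)) := by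
        rw [← Module.End.mul_apply, ← hcomm.eq, Module.End.mul_apply]
    _ = c (omegaOp conj ann f (omegaWord conj ann L 1)) :=
        (LinearMap.congr_fun
          (comp_omegaOp_eq_comp_omegaRight hann0 hann hsym hcycrot hcrec f) _).symm
    _ = c (omegaWord conj ann (f :: L) 1) := by simp [omegaWord]

theorem map_omegaWord_append_comm (L₁ L₂ : List H) :
    c (omegaWord conj ann (L₁ ++ L₂) 1) = c (omegaWord conj ann (L₂ ++ L₁) 1) := by
  induction L₁ generalizing L₂ with
  | nil => simp
  | cons f L ih =>
    rw [List.cons_append, ← map_omegaWord_rotate hann0 hann hsym hcycrot hcrec,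
      List.append_assoc, ih, List.append_assoc, List.singleton_append]

end Semicircular
end CyclicFock

theorem cyclic_map_tracial_semicircular_general {H : Type*} [NormedAddCommGroup H]
    [InnerProductSpace ℂ H]
    (conj : H → H) (ann : H → Module.End ℂ (TensorAlgebra ℂ H))
    (hann0 : ∀ g, ann g 1 = 0)
    (hann : ∀ g f₁ (x : TensorAlgebra ℂ H),
      ann g (TensorAlgebra.ι ℂ f₁ * x) = (inner ℂ g f₁ : ℂ) • x)
    (hsym : ∀ f g : H, (inner ℂ (conj f) g : ℂ) = (inner ℂ (conj g) f : ℂ))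
    (V : Type*) [AddCommGroup V] [Module ℂ V]
    (cycT : List H → V)
    (hcycrot : ∀ (f : H) (fs : List H), cycT (fs ++ [f]) = cycT (f :: fs))
    (c : TensorAlgebra ℂ H →ₗ[ℂ] V)
    (hcrec : ∀ (f : H) (fs : List H),
      c (((f :: fs).map (TensorAlgebra.ι ℂ)).prod) =
        cycT (f :: fs) +
          (inner ℂ (conj ((f :: fs).getLast (List.cons_ne_nil f fs))) f : ℂ) •
            c ((fs.dropLast.map (TensorAlgebra.ι ℂ)).prod)) :
    ∀ a ∈ Algebra.adjoin ℂ (Set.range (omegaOp conj ann)),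
      ∀ b ∈ Algebra.adjoin ℂ (Set.range (omegaOp conj ann)),
        c ((a * b) 1) = c ((b * a) 1) := by
  intro a ha b hb
  rw [← Subalgebra.mem_toSubmodule,
    CyclicFock.toSubmodule_adjoin_range_eq_span_prod_map] at ha hb
  refine CyclicFock.map_mul_comm_of_mem_span (c ∘ₗ LinearMap.applyₗ 1) ?_ a ha b hb
  rintro _ ⟨L₁, rfl⟩ _ ⟨L₂, rfl⟩
  simpa [CyclicFock.omegaWord] using
    CyclicFock.map_omegaWord_append_comm hann0 hann hsym hcycrot hcrec L₁ L₂

/-- the map `a ↦ c(aΩ)` from the algebra `A(H_ℝ)` generated by the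
semicircular operators `ω(f)` into the cyclic Fock space is tracial:
`c(abΩ) = c(baΩ)` for all `a, b ∈ A(H_ℝ)`.  Here the linear Fock space is the
tensor algebra, `V` is the cyclic Fock space with circular tensors `cycT`
(invariant under cyclic rotation), and `c` is defined by `cΩ = 0` and
`c(f₁⊗⋯⊗fₙ) = [f₁⊗⋯⊗fₙ] + ⟨f₁, f̄ₙ⟩ c(f₂⊗⋯⊗f_{n-1})`. -/
theorem cyclic_map_tracial_semicircular {H : Type*} [NormedAddCommGroup H]
    [InnerProductSpace ℂ H]
    (conj : H → H) (ann : H → Module.End ℂ (TensorAlgebra ℂ H))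
    (hann0 : ∀ g, ann g 1 = 0)
    (hann : ∀ g f₁ (x : TensorAlgebra ℂ H),
      ann g (TensorAlgebra.ι ℂ f₁ * x) = (inner ℂ g f₁ : ℂ) • x)
    (hsym : ∀ f g : H, (inner ℂ (conj f) g : ℂ) = (inner ℂ (conj g) f : ℂ))
    (hsep : ∀ T ∈ Algebra.adjoin ℂ (Set.range (omegaOp conj ann)),
      T 1 = 0 → T = 0)
    (V : Type*) [AddCommGroup V] [Module ℂ V]
    (cycT : List H → V)
    (hcycrot : ∀ (f : H) (fs : List H), cycT (fs ++ [f]) = cycT (f :: fs))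
    (c : TensorAlgebra ℂ H →ₗ[ℂ] V)
    (hc0 : c 1 = 0)
    (hcrec : ∀ (f : H) (fs : List H),
      c (((f :: fs).map (TensorAlgebra.ι ℂ)).prod) =
        cycT (f :: fs) +
          (inner ℂ (conj ((f :: fs).getLast (List.cons_ne_nil f fs))) f : ℂ) •
            c ((fs.dropLast.map (TensorAlgebra.ι ℂ)).prod)) :
    ∀ a ∈ Algebra.adjoin ℂ (Set.range (omegaOp conj ann)),
      ∀ b ∈ Algebra.adjoin ℂ (Set.range (omegaOp conj ann)),
        c ((a * b) 1) = c ((b * a) 1) :=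
  cyclic_map_tracial_semicircular_general conj ann hann0 hann hsym V cycT hcycrot c hcrec
end

section
/- The map a ↦ c(aΩ) from the algebra A(D) generated by the compound Poisson operators p(d) into the cyclic Fock space over D is tracial: for all a, b ∈ A(D), c(abΩ) = c(baΩ). Equivalently, it suffices that c(d ⊗ d_1 ⊗ ··· ⊗ d_n + ψ(dd_1) d_2⊗···⊗d_n + dd_1 ⊗ d_2⊗···⊗d_n) = c(d_1⊗···⊗d_n⊗d + ψ(d_n d) d_1⊗···⊗d_{n-1} + d_1⊗···⊗d_{n-1}⊗ d_n d) for all d, d_1, ..., d_n ∈ D. -/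
/-!
Besides the left Poisson operator `p(d)` there is a right one, `R(d)`: it appends `d` to a word,
or multiplies its last letter by `d` (with and without contracting by `ψ`), and adds `ψ(d)`.
Left and right operators commute, and `R(d)Ω = p(d)Ω`. The cyclic identity of the second claim,
which follows from the recursion for `c`, the rotation invariance of cyclic words and the
traciality of `ψ`, says precisely that `c ∘ p(d) = c ∘ R(d)`. Hence for `b` in the algebra
(with `Ω = 1`) `c(p(d) b Ω) = c(R(d) b Ω) = c(b R(d) Ω) = c(b p(d) Ω)`, and traciality passes
from the generators `p(d)` to products.
-/

/-- The creation operator `l(d)` on the algebraic full Fock space over the algebra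
`D`, modelled as the tensor algebra. -/
noncomputable def creOpD {D : Type*} [Ring D] [Algebra ℂ D] (d : D) :
    Module.End ℂ (TensorAlgebra ℂ D) :=
  LinearMap.mulLeft ℂ (TensorAlgebra.ι ℂ d)

/-- The compound Poisson operator `p(d) = l(d) + l*(d*) + Λ(d) + ψ(d)1`. -/
noncomputable def poissonOp {D : Type*} [Ring D] [Algebra ℂ D] [StarRing D]
    (ψ : D →ₗ[ℂ] ℂ) (ann gauge : D → Module.End ℂ (TensorAlgebra ℂ D)) (d : D) :
    Module.End ℂ (TensorAlgebra ℂ D) :=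
  creOpD d + ann (star d) + gauge d + ψ d • (1 : Module.End ℂ (TensorAlgebra ℂ D))

namespace CyclicFock

open TensorAlgebra Submodule Set

section Words

variable {K M : Type*} [CommSemiring K] [AddCommMonoid M] [Module K M]

noncomputable def word (l : List M) : TensorAlgebra K M := (l.map (ι K)).prod

@[simp] lemma word_nil : word ([] : List M) = (1 : TensorAlgebra K M) := rfl

lemma word_cons (m : M) (l : List M) : (word (m :: l) : TensorAlgebra K M) = ι K m * word l :=
  List.prod_cons

lemma word_append (l l' : List M) :
    (word (l ++ l') : TensorAlgebra K M) = word l * word l' := by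
  simp [word]

lemma word_singleton (m : M) : (word [m] : TensorAlgebra K M) = ι K m := by
  simp [word]

lemma span_range_word : span K (range (word : List M → TensorAlgebra K M)) = ⊤ := by
  refine eq_top_iff.2 fun x _ => ?_
  have hx : x ∈ Subalgebra.toSubmodule (Algebra.adjoin K (range (ι K (M := M)))) := by
    simp [adjoin_range_ι]
  rw [Algebra.adjoin_eq_span] at hx
  refine span_mono (fun y hy => ?_) hx
  induction hy using Submonoid.closure_induction with
  | mem y hy => obtain ⟨m, rfl⟩ := hy; exact ⟨[m], word_singleton m⟩
  | one => exact ⟨[], rfl⟩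
  | mul y z _ _ hy hz =>
    obtain ⟨l, rfl⟩ := hy
    obtain ⟨l', rfl⟩ := hz
    exact ⟨l ++ l', word_append l l'⟩

lemma algebraMapInv_word {l : List M} (hl : l ≠ []) :
    algebraMapInv (word l : TensorAlgebra K M) = 0 := by
  obtain ⟨m, l, rfl⟩ := List.exists_cons_of_ne_nil hl
  simp [algebraMapInv, word_cons]

end Words

section RightPoisson

variable {K D : Type*} [CommSemiring K] [Semiring D] [Algebra K D] (ψ : D →ₗ[K] K)

noncomputable def rightCorrection (d : D) : D →ₗ[K] TensorAlgebra K D :=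
  (Algebra.linearMap K _ ∘ₗ ψ + ι K) ∘ₗ LinearMap.mulRight K d

lemma rightCorrection_apply (d e : D) :
    rightCorrection ψ d e = ψ (e * d) • 1 + ι K (e * d) := by
  simp [rightCorrection, Algebra.algebraMap_eq_smul_one]

/-- `R(d)` is not multiplicative, but `x ↦ (x, R(d) x)` is for this triangular action on pairs,
so `lift` builds it; here `algebraMapInv` reads off the vacuum component. -/
noncomputable def rightPoissonPairAction (d : D) :
    D →ₗ[K] Module.End K (TensorAlgebra K D × TensorAlgebra K D) :=
  LinearMap.mk₂ K
    (fun e p => (ι K e * p.1, ι K e * p.2 + algebraMapInv p.1 • rightCorrection ψ d e))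
    (fun e e' p => by
      ext <;> simp only [map_add, add_mul, smul_add, Prod.fst_add, Prod.snd_add]
      abel)
    (fun r e p => by ext <;> simp [smul_comm r])
    (fun e p p' => by
      ext <;> simp only [Prod.fst_add, Prod.snd_add, map_add, mul_add, add_smul]
      abel)
    (fun r e p => by ext <;> simp [smul_smul])

lemma rightPoissonPairAction_apply (d e : D) (p : TensorAlgebra K D × TensorAlgebra K D) :
    rightPoissonPairAction ψ d e p =
      (ι K e * p.1, ι K e * p.2 + algebraMapInv p.1 • rightCorrection ψ d e) := rfl

noncomputable def rightPoissonOp (d : D) : Module.End K (TensorAlgebra K D) :=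
  LinearMap.snd K _ _ ∘ₗ LinearMap.applyₗ (1, ι K d + ψ d • 1) ∘ₗ
    (lift K (rightPoissonPairAction ψ d)).toLinearMap

lemma lift_rightPoissonPairAction_apply_fst (d : D) (x : TensorAlgebra K D)
    (p : TensorAlgebra K D × TensorAlgebra K D) :
    (lift K (rightPoissonPairAction ψ d) x p).1 = x * p.1 := by
  induction x using TensorAlgebra.induction generalizing p with
  | algebraMap r => simp [Algebra.smul_def, Module.algebraMap_end_apply]
  | ι e => simp [rightPoissonPairAction_apply]
  | mul x y hx hy => simp [hx, hy, mul_assoc]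
  | add x y hx hy => simp [hx, hy, add_mul]

lemma rightPoissonOp_one (d : D) : rightPoissonOp ψ d 1 = ι K d + ψ d • 1 := by
  simp [rightPoissonOp]

lemma rightPoissonOp_ι_mul (d e : D) (x : TensorAlgebra K D) :
    rightPoissonOp ψ d (ι K e * x) =
      ι K e * rightPoissonOp ψ d x + algebraMapInv x • rightCorrection ψ d e := by
  simp [rightPoissonOp, rightPoissonPairAction_apply, lift_rightPoissonPairAction_apply_fst]

lemma rightPoissonOp_word (d : D) (l : List D) (hl : l ≠ []) :
    rightPoissonOp ψ d (word l) = word (l ++ [d]) + ψ (l.getLast hl * d) • word l.dropLast +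
      word (l.dropLast ++ [l.getLast hl * d]) + ψ d • word l := by
  induction l with
  | nil => exact absurd rfl hl
  | cons f t ih =>
    rw [word_cons, rightPoissonOp_ι_mul]
    rcases eq_or_ne t [] with rfl | ht
    · simp [rightPoissonOp_one, rightCorrection_apply, mul_add, word_cons]
      abel
    · simp [algebraMapInv_word ht, List.getLast_cons ht, List.dropLast_cons_of_ne_nil ht, ih ht,
        mul_add, word_cons]

lemma rightPoissonOp_ι (d e : D) :
    rightPoissonOp ψ d (ι K e) = ι K e * (ι K d + ψ d • 1) + rightCorrection ψ d e := by
  simpa [rightPoissonOp_one] using rightPoissonOp_ι_mul ψ d e 1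

end RightPoisson

section Cyclic

variable {K D V : Type*} [CommSemiring K] [Semiring D] [Algebra K D] [AddCommMonoid V]
  [Module K V]

lemma map_left_word_eq_map_right_word (ψ : D →ₗ[K] K) (hψ : ∀ u v : D, ψ (u * v) = ψ (v * u))
    (cyc : List D → V) (hrot : ∀ (d : D) (ds : List D), cyc (ds ++ [d]) = cyc (d :: ds))
    (c : TensorAlgebra K D →ₗ[K] V) (hc : ∀ d, c (ι K d) = cyc [d])
    (hcword : ∀ (d : D) (ds : List D) (hds : ds ≠ []),
      c (word (d :: ds)) = cyc (d :: ds) + cyc ((ds.getLast hds * d) :: ds.dropLast) +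
        ψ (d * ds.getLast hds) • c (word ds.dropLast))
    (d d₁ : D) (rest : List D) :
    c (ι K d * word (d₁ :: rest) + ψ (d * d₁) • word rest + ι K (d * d₁) * word rest) =
      c (word ((d₁ :: rest) ++ [d]) +
        ψ ((d₁ :: rest).getLast (List.cons_ne_nil d₁ rest) * d) • word (d₁ :: rest).dropLast +
        word ((d₁ :: rest).dropLast ++
          [(d₁ :: rest).getLast (List.cons_ne_nil d₁ rest) * d])) := by
  simp only [← word_cons, map_add, map_smul]
  rcases rest.eq_nil_or_concat' with rfl | ⟨q, r, rfl⟩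
  · simp [hcword, word_singleton, hc, show cyc [d₁, d] = cyc [d, d₁] from hrot d [d₁], hψ d d₁]
    abel
  · have e1 := hrot d (d₁ :: (q ++ [r]))
    have e2 := hrot (r * d) (d₁ :: q)
    have hdrop : (d₁ :: (q ++ [r])).dropLast = d₁ :: q :=
      List.dropLast_concat (l₁ := d₁ :: q)
    simp only [List.cons_append, List.append_assoc, List.nil_append] at e1 e2
    simp [hcword, hdrop, e1, e2, hψ d r, hψ d d₁, mul_assoc, hψ d (d₁ * r)]
    abel

end Cyclic

section Tracial

variable {K M N : Type*} [CommSemiring K] [AddCommMonoid M] [Module K M] [AddCommMonoid N]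
  [Module K N]

theorem map_apply_mul_comm_of_commuting_twins {s : Set (Module.End K M)} (c : M →ₗ[K] N)
    (ω : M)
    (htwin : ∀ g ∈ s, ∃ r : Module.End K M,
      (∀ b ∈ s, Commute r b) ∧ c ∘ₗ g = c ∘ₗ r ∧ r ω = g ω)
    {a b : Module.End K M} (ha : a ∈ Algebra.adjoin K s) (hb : b ∈ Algebra.adjoin K s) :
    c ((a * b) ω) = c ((b * a) ω) := by
  induction ha using Algebra.adjoin_induction generalizing b with
  | mem g hg =>
    obtain ⟨r, hr, hcr, hrω⟩ := htwin g hg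
    have hrb : Commute r b := Algebra.commute_of_mem_adjoin_of_forall_mem_commute hb hr
    calc c (g (b ω)) = c (r (b ω)) := LinearMap.congr_fun hcr _
      _ = c (b (r ω)) := by rw [← Module.End.mul_apply, hrb.eq, Module.End.mul_apply]
      _ = c (b (g ω)) := by rw [hrω]
  | algebraMap k => rw [Algebra.commutes k b]
  | add x y _ _ hx hy => simp only [add_mul, mul_add, LinearMap.add_apply, map_add, hx hb, hy hb]
  | mul x y hx' hy' hx hy =>
    calc c ((x * y * b) ω) = c ((y * b * x) ω) := by rw [mul_assoc, hx (mul_mem hy' hb)]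
      _ = c ((b * (x * y)) ω) := by rw [mul_assoc, hy (mul_mem hb hx'), mul_assoc]

end Tracial

section LeftPoisson

variable {K D : Type*} [CommSemiring K] [Semiring D] [Algebra K D] {ψ : D →ₗ[K] K}

structure IsLeftPoissonFamily (ψ : D →ₗ[K] K) (p : D → Module.End K (TensorAlgebra K D)) :
    Prop where
  apply_one : ∀ d, p d 1 = ι K d + ψ d • 1
  apply_ι_mul : ∀ d e x,
    p d (ι K e * x) = ι K d * (ι K e * x) + ψ (d * e) • x + ι K (d * e) * x + ψ d • (ι K e * x)

namespace IsLeftPoissonFamily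

variable {p : D → Module.End K (TensorAlgebra K D)}

lemma apply_ι (hp : IsLeftPoissonFamily ψ p) (d e : D) :
    p d (ι K e) = ι K d * ι K e + ψ (d * e) • 1 + ι K (d * e) + ψ d • ι K e := by
  simpa using hp.apply_ι_mul d e 1

lemma commute_rightPoissonOp (hp : IsLeftPoissonFamily ψ p) (d e : D) :
    Commute (rightPoissonOp ψ d) (p e) := by
  refine LinearMap.ext_on_range span_range_word fun l => ?_
  cases l with
  | nil =>
    simp [rightPoissonOp_one, hp.apply_one, rightPoissonOp_ι, hp.apply_ι, rightCorrection_apply,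
      mul_add]
    module
  | cons f t =>
    have hδ : algebraMapInv (ι K f * word t) = 0 := algebraMapInv_word (List.cons_ne_nil f t)
    simp only [Module.End.mul_apply, word_cons, rightPoissonOp_ι_mul, hp.apply_ι_mul, map_add,
      map_smul, hδ, rightCorrection_apply, hp.apply_one, hp.apply_ι]
    simp only [mul_add, smul_add, mul_smul_comm, smul_smul, mul_assoc, mul_one, zero_smul]
    module

lemma comp_eq_comp_rightPoissonOp {V : Type*} [AddCommMonoid V] [Module K V]
    (hp : IsLeftPoissonFamily ψ p) (c : TensorAlgebra K D →ₗ[K] V) (d : D)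
    (hc : ∀ (d₁ : D) (rest : List D),
      c (ι K d * word (d₁ :: rest) + ψ (d * d₁) • word rest + ι K (d * d₁) * word rest) =
        c (word ((d₁ :: rest) ++ [d]) +
          ψ ((d₁ :: rest).getLast (List.cons_ne_nil d₁ rest) * d) • word (d₁ :: rest).dropLast +
          word ((d₁ :: rest).dropLast ++
            [(d₁ :: rest).getLast (List.cons_ne_nil d₁ rest) * d]))) :
    c ∘ₗ p d = c ∘ₗ rightPoissonOp ψ d := by
  refine LinearMap.ext_on_range span_range_word fun l => ?_
  cases l with
  | nil => simp [rightPoissonOp_one, hp.apply_one]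
  | cons d₁ rest =>
    rw [LinearMap.comp_apply, LinearMap.comp_apply,
      rightPoissonOp_word ψ d _ (List.cons_ne_nil _ _), word_cons, hp.apply_ι_mul, ← word_cons,
      map_add, map_add c _ (ψ d • _), hc]

end IsLeftPoissonFamily

end LeftPoisson

lemma isLeftPoissonFamily_poissonOp {D : Type*} [Ring D] [Algebra ℂ D] [StarRing D]
    (ψ : D →ₗ[ℂ] ℂ) {ann gauge : D → Module.End ℂ (TensorAlgebra ℂ D)}
    (hann0 : ∀ d, ann d 1 = 0) (hann : ∀ d e x, ann d (ι ℂ e * x) = ψ (star d * e) • x)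
    (hgauge0 : ∀ d, gauge d 1 = 0) (hgauge : ∀ d e x, gauge d (ι ℂ e * x) = ι ℂ (d * e) * x) :
    IsLeftPoissonFamily ψ (poissonOp ψ ann gauge) where
  apply_one d := by simp [poissonOp, creOpD, hann0, hgauge0]
  apply_ι_mul d e x := by simp [poissonOp, creOpD, hann, hgauge]

end CyclicFock

open CyclicFock in
theorem cyclic_map_tracial_poisson_general {D : Type*} [Ring D] [Algebra ℂ D] [StarRing D]
    (ψ : D →ₗ[ℂ] ℂ) (hψtr : ∀ u v : D, ψ (u * v) = ψ (v * u))
    (ann gauge : D → Module.End ℂ (TensorAlgebra ℂ D))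
    (hann0 : ∀ d, ann d 1 = 0)
    (hann : ∀ d e (x : TensorAlgebra ℂ D),
      ann d (TensorAlgebra.ι ℂ e * x) = ψ (star d * e) • x)
    (hgauge0 : ∀ d, gauge d 1 = 0)
    (hgauge : ∀ d e (x : TensorAlgebra ℂ D),
      gauge d (TensorAlgebra.ι ℂ e * x) = TensorAlgebra.ι ℂ (d * e) * x)
    (V : Type*) [AddCommGroup V] [Module ℂ V]
    (cycD : List D → V)
    (hcycrot : ∀ (d : D) (ds : List D), cycD (ds ++ [d]) = cycD (d :: ds))
    (c : TensorAlgebra ℂ D →ₗ[ℂ] V)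
    (hc1 : ∀ d, c (TensorAlgebra.ι ℂ d) = cycD [d])
    (hcrec : ∀ (d : D) (ds : List D) (hds : ds ≠ []),
      c (((d :: ds).map (TensorAlgebra.ι ℂ)).prod) =
        cycD (d :: ds) + cycD ((ds.getLast hds * d) :: ds.dropLast) +
          ψ (d * ds.getLast hds) • c ((ds.dropLast.map (TensorAlgebra.ι ℂ)).prod)) :
    (∀ a ∈ Algebra.adjoin ℂ (Set.range (poissonOp ψ ann gauge)),
      ∀ b ∈ Algebra.adjoin ℂ (Set.range (poissonOp ψ ann gauge)),
        c ((a * b) 1) = c ((b * a) 1)) ∧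
    (∀ (d d₁ : D) (rest : List D),
      c ((TensorAlgebra.ι ℂ d * ((d₁ :: rest).map (TensorAlgebra.ι ℂ)).prod) +
          ψ (d * d₁) • ((rest.map (TensorAlgebra.ι ℂ)).prod) +
          TensorAlgebra.ι ℂ (d * d₁) * ((rest.map (TensorAlgebra.ι ℂ)).prod)) =
        c ((((d₁ :: rest) ++ [d]).map (TensorAlgebra.ι ℂ)).prod +
          ψ ((d₁ :: rest).getLast (List.cons_ne_nil d₁ rest) * d) •
            (((d₁ :: rest).dropLast.map (TensorAlgebra.ι ℂ)).prod) +
          (((d₁ :: rest).dropLast ++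
            [(d₁ :: rest).getLast (List.cons_ne_nil d₁ rest) * d]).map
              (TensorAlgebra.ι ℂ)).prod)) := by
  have hp := isLeftPoissonFamily_poissonOp ψ hann0 hann hgauge0 hgauge
  have key := map_left_word_eq_map_right_word ψ hψtr cycD hcycrot c hc1 hcrec
  refine ⟨fun a ha b hb => map_apply_mul_comm_of_commuting_twins c 1 ?_ ha hb, key⟩
  rintro _ ⟨d, rfl⟩
  refine ⟨rightPoissonOp ψ d, ?_, hp.comp_eq_comp_rightPoissonOp c d (key d), ?_⟩
  · rintro _ ⟨e, rfl⟩
    exact hp.commute_rightPoissonOp d e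
  · rw [rightPoissonOp_one, hp.apply_one]

/-- the map `a ↦ c(aΩ)` from the algebra `A(D)` generated by the
compound Poisson operators `p(d)` into the cyclic Fock space over `D` is tracial,
and moreover
`c(d⊗d₁⊗⋯⊗dₙ + ψ(dd₁) d₂⊗⋯⊗dₙ + dd₁⊗d₂⊗⋯⊗dₙ)
  = c(d₁⊗⋯⊗dₙ⊗d + ψ(dₙd) d₁⊗⋯⊗d_{n-1} + d₁⊗⋯⊗d_{n-1}⊗dₙd)`. -/
theorem cyclic_map_tracial_poisson {D : Type*} [Ring D] [Algebra ℂ D] [StarRing D]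
    (ψ : D →ₗ[ℂ] ℂ) (hψtr : ∀ u v : D, ψ (u * v) = ψ (v * u)) (hψ1 : ψ 1 = 1)
    (ann gauge : D → Module.End ℂ (TensorAlgebra ℂ D))
    (hann0 : ∀ d, ann d 1 = 0)
    (hann : ∀ d e (x : TensorAlgebra ℂ D),
      ann d (TensorAlgebra.ι ℂ e * x) = ψ (star d * e) • x)
    (hgauge0 : ∀ d, gauge d 1 = 0)
    (hgauge : ∀ d e (x : TensorAlgebra ℂ D),
      gauge d (TensorAlgebra.ι ℂ e * x) = TensorAlgebra.ι ℂ (d * e) * x)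
    (hsep : ∀ T ∈ Algebra.adjoin ℂ (Set.range (poissonOp ψ ann gauge)),
      T 1 = 0 → T = 0)
    (V : Type*) [AddCommGroup V] [Module ℂ V]
    (cycD : List D → V)
    (hcycrot : ∀ (d : D) (ds : List D), cycD (ds ++ [d]) = cycD (d :: ds))
    (c : TensorAlgebra ℂ D →ₗ[ℂ] V)
    (hc0 : c 1 = 0)
    (hc1 : ∀ d, c (TensorAlgebra.ι ℂ d) = cycD [d])
    (hcrec : ∀ (d : D) (ds : List D) (hds : ds ≠ []),
      c (((d :: ds).map (TensorAlgebra.ι ℂ)).prod) =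
        cycD (d :: ds) + cycD ((ds.getLast hds * d) :: ds.dropLast) +
          ψ (d * ds.getLast hds) • c ((ds.dropLast.map (TensorAlgebra.ι ℂ)).prod)) :
    (∀ a ∈ Algebra.adjoin ℂ (Set.range (poissonOp ψ ann gauge)),
      ∀ b ∈ Algebra.adjoin ℂ (Set.range (poissonOp ψ ann gauge)),
        c ((a * b) 1) = c ((b * a) 1)) ∧
    (∀ (d d₁ : D) (rest : List D),
      c ((TensorAlgebra.ι ℂ d * ((d₁ :: rest).map (TensorAlgebra.ι ℂ)).prod) +
          ψ (d * d₁) • ((rest.map (TensorAlgebra.ι ℂ)).prod) +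
          TensorAlgebra.ι ℂ (d * d₁) * ((rest.map (TensorAlgebra.ι ℂ)).prod)) =
        c ((((d₁ :: rest) ++ [d]).map (TensorAlgebra.ι ℂ)).prod +
          ψ ((d₁ :: rest).getLast (List.cons_ne_nil d₁ rest) * d) •
            (((d₁ :: rest).dropLast.map (TensorAlgebra.ι ℂ)).prod) +
          (((d₁ :: rest).dropLast ++
            [(d₁ :: rest).getLast (List.cons_ne_nil d₁ rest) * d]).map
              (TensorAlgebra.ι ℂ)).prod)) :=
  cyclic_map_tracial_poisson_general ψ hψtr ann gauge hann0 hann hgauge0 hgauge V cycD hcycrot c hc1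
    hcrec
end

section
/- In a second order non-commutative probability space (A, φ, ρ) with subalgebras A_1,...,A_r free of second order, if (a_1,...,a_n) and (b_1,...,b_m) are cyclically alternating tuples and the subalgebra of a_1 occurs only once among all of a_1,...,a_n, b_1,...,b_m, then ρ(a_1···a_n, b_1···b_m) = φ(a_1)·ρ(a_2···a_n, b_1···b_m). Symmetrically, if the subalgebra of b_1 appears only once, ρ(a_1···a_n, b_1···b_m) = φ(b_1)·ρ(a_1···a_n, b_2···b_m). -/
section SecondOrder

variable {A : Type*} [Ring A] [Algebra ℂ A] {ι : Type*}

/-- The product `a_0 a_1 ⋯ a_{n-1}`. -/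
def cycProd (a : ℕ → A) (n : ℕ) : A := (List.ofFn (fun k : Fin n => a (k : ℕ))).prod

/-- A tuple `(a_0,…,a_{n-1})` with colours `i` is cyclically alternating if
cyclically adjacent elements come from different subalgebras. -/
def CycAlt (i : ℕ → ι) (n : ℕ) : Prop := 2 ≤ n → ∀ k < n, i k ≠ i ((k + 1) % n)

/-- Freeness (of first order) of a family of subalgebras with respect to `φ`. -/
def FirstOrderFree (φ : A →ₗ[ℂ] ℂ) (B : ι → Subalgebra ℂ A) : Prop :=
  ∀ (n : ℕ) (idx : ℕ → ι) (a : ℕ → A), 1 ≤ n →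
    (∀ k < n, a k ∈ B (idx k)) → (∀ k < n, φ (a k) = 0) →
    (∀ k, k + 1 < n → idx k ≠ idx (k + 1)) → φ (cycProd a n) = 0

/-- Second order freeness of the subalgebras `B i` with respect to `(φ, ρ)`:
freeness with respect to `φ` together with conditions (i), (ii), (iii) on centered
cyclically alternating tuples. -/
def SecondOrderFree (φ : A →ₗ[ℂ] ℂ) (ρ : A →ₗ[ℂ] A →ₗ[ℂ] ℂ)
    (B : ι → Subalgebra ℂ A) : Prop :=
  FirstOrderFree φ B ∧
  -- (i)
  (∀ (n m : ℕ) (ia ib : ℕ → ι) (a b : ℕ → A), 1 ≤ n → 1 ≤ m → n ≠ m →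
    (∀ k < n, a k ∈ B (ia k)) → (∀ l < m, b l ∈ B (ib l)) →
    (∀ k < n, φ (a k) = 0) → (∀ l < m, φ (b l) = 0) →
    CycAlt ia n → CycAlt ib m →
    ρ (cycProd a n) (cycProd b m) = 0) ∧
  -- (ii)
  (∀ (i j : ι), i ≠ j → ∀ a ∈ B i, ∀ b ∈ B j, φ a = 0 → φ b = 0 → ρ a b = 0) ∧
  -- (iii)
  (∀ (n : ℕ) (ia ib : ℕ → ι) (a b : ℕ → A), 2 ≤ n →
    (∀ k < n, a k ∈ B (ia k)) → (∀ l < n, b l ∈ B (ib l)) →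
    (∀ k < n, φ (a k) = 0) → (∀ l < n, φ (b l) = 0) →
    CycAlt ia n → CycAlt ib n →
    ρ (cycProd a n) (cycProd b n) =
      ∑ k ∈ Finset.range n, ∏ j ∈ Finset.range n, φ (a j * b ((k + (n - 1 - j)) % n)))

end SecondOrder

/-!
Write the lonely letter as `x = x° + φ x • 1` with `x°` centered; the second term gives the
right-hand side, so it suffices that `ρ` vanishes on two words in which a centered letter has a
colour occurring nowhere else. Such a pair is reduced until all letters are centered and both
words are cyclically alternating: an uncentered letter is split off in the same way, and two
cyclically adjacent letters of equal colour are merged after rotating the word, which is allowed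
because `ρ` is tracial in each argument. Each step lowers a weight and never touches the lonely
letter. For reduced words the axioms (i)–(iii) give zero: in (iii) every summand contains a
factor `φ (x° * y)` with `y` centered of another colour, which vanishes by freeness.
-/

/-- `j ↦ (k + (n - 1 - j)) % n` is the involution `j ↦ k - 1 - j` of `ℤ/nℤ`. -/
lemma Nat.reflect_mod_reflect_mod {n j : ℕ} (k : ℕ) (hj : j < n) :
    (k + (n - 1 - (k + (n - 1 - j)) % n)) % n = j := by
  have hdiv := Nat.div_add_mod (k + (n - 1 - j)) n
  have hlt := Nat.mod_lt (k + (n - 1 - j)) (by omega : 0 < n)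
  rw [show k + (n - 1 - (k + (n - 1 - j)) % n) = j + n * ((k + (n - 1 - j)) / n) by omega,
    Nat.add_mul_mod_self_left, Nat.mod_eq_of_lt hj]

section Words

variable {A : Type*} {ι : Type*}

/-- `d` only pads the sequence beyond `L.length`. -/
def colourSeq (d : ι) (L : List (ι × A)) : ℕ → ι := fun k => (L.map Prod.fst).getD k d

lemma colourSeq_of_lt (d : ι) {L : List (ι × A)} {k : ℕ} (hk : k < L.length) :
    colourSeq d L k = L[k].1 := by
  simp [colourSeq, List.getElem?_eq_getElem hk]

lemma exists_colourSeq_eq_of_mem (d : ι) {L : List (ι × A)} {j : ι} (h : j ∈ L.map Prod.fst) :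
    ∃ k < L.length, colourSeq d L k = j := by
  obtain ⟨p, hp, rfl⟩ := List.mem_map.1 h
  obtain ⟨k, hk, rfl⟩ := List.getElem_of_mem hp
  exact ⟨k, hk, colourSeq_of_lt d hk⟩

lemma colourSeq_ne_of_not_mem (d : ι) {L : List (ι × A)} {j : ι} (h : j ∉ L.map Prod.fst)
    {k : ℕ} (hk : k < L.length) : colourSeq d L k ≠ j := by
  rw [colourSeq_of_lt d hk]
  exact fun hkj => h (List.mem_map.2 ⟨_, List.getElem_mem hk, hkj⟩)

lemma exists_rotate_eq_cons_cons {d : ι} {L : List (ι × A)}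
    (h : ¬ CycAlt (colourSeq d L) L.length) :
    ∃ k u v Q, L.rotate k = u :: v :: Q ∧ u.1 = v.1 := by
  simp only [CycAlt, Classical.not_imp, not_forall, not_not] at h
  obtain ⟨hn, k, hk, hclash⟩ := h
  rw [colourSeq_of_lt d hk, colourSeq_of_lt d (Nat.mod_lt _ (by omega))] at hclash
  refine ⟨k, ?_⟩
  match hR : L.rotate k with
  | [] | [_] => simp [← List.length_rotate L k, hR] at hn
  | u :: v :: Q =>
    have hu := List.getElem_rotate L k 0 (by simp [hR])
    have hv := List.getElem_rotate L k 1 (by simp [hR])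
    simp only [hR, List.getElem_cons_zero, List.getElem_cons_succ, zero_add,
      Nat.mod_eq_of_lt hk, add_comm 1 k] at hu hv
    exact ⟨u, v, Q, rfl, by simpa only [hu, hv] using hclash⟩

def seqWord (ia : ℕ → ι) (a : ℕ → A) (n : ℕ) : List (ι × A) :=
  List.ofFn fun k : Fin n => (ia k, a k)

lemma mem_seqWord {ia : ℕ → ι} {a : ℕ → A} {n : ℕ} {p : ι × A} :
    p ∈ seqWord ia a n ↔ ∃ k < n, (ia k, a k) = p := by
  simp [seqWord, List.mem_ofFn, Fin.exists_iff]

lemma seqWord_succ (ia : ℕ → ι) (a : ℕ → A) (n : ℕ) :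
    seqWord ia a (n + 1) =
      (ia 0, a 0) :: seqWord (fun k => ia (k + 1)) (fun k => a (k + 1)) n := by
  simp [seqWord, List.ofFn_succ]

variable [Ring A]

lemma cycProd_zero (a : ℕ → A) : cycProd a 0 = 1 := rfl

lemma cycProd_succ (a : ℕ → A) (n : ℕ) :
    cycProd a (n + 1) = a 0 * cycProd (fun k => a (k + 1)) n := by
  simp [cycProd, List.ofFn_succ]

lemma cycProd_one (a : ℕ → A) : cycProd a 1 = a 0 := by
  simp [cycProd_succ, cycProd_zero]

def wordProd (L : List (ι × A)) : A := (L.map Prod.snd).prod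

@[simp] lemma wordProd_nil : wordProd ([] : List (ι × A)) = 1 := rfl

@[simp] lemma wordProd_cons (p : ι × A) (L : List (ι × A)) :
    wordProd (p :: L) = p.2 * wordProd L := by
  simp [wordProd]

@[simp] lemma wordProd_append (L M : List (ι × A)) :
    wordProd (L ++ M) = wordProd L * wordProd M := by
  simp [wordProd]

lemma wordProd_cons_cons (u v : ι × A) (Q : List (ι × A)) :
    wordProd (u :: v :: Q) = wordProd ((u.1, u.2 * v.2) :: Q) := by
  simp [mul_assoc]

lemma apply_wordProd_rotate {M : Type*} (f : A → M) (hf : ∀ x y, f (x * y) = f (y * x))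
    (L : List (ι × A)) (k : ℕ) : f (wordProd (L.rotate k)) = f (wordProd L) := by
  rw [List.rotate_eq_drop_append_take_mod, wordProd_append, hf, ← wordProd_append,
    List.take_append_drop]

lemma wordProd_seqWord (ia : ℕ → ι) (a : ℕ → A) (n : ℕ) :
    wordProd (seqWord ia a n) = cycProd a n := by
  simp [wordProd, seqWord, cycProd, List.map_ofFn, Function.comp_def]

def letterSeq (L : List (ι × A)) : ℕ → A := fun k => (L.map Prod.snd).getD k 1

lemma letterSeq_of_lt {L : List (ι × A)} {k : ℕ} (hk : k < L.length) :
    letterSeq L k = L[k].2 := by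
  simp [letterSeq, List.getElem?_eq_getElem hk]

lemma forall_lt_length_seq {P : ι → A → Prop} (d : ι) {L : List (ι × A)}
    (h : ∀ p ∈ L, P p.1 p.2) : ∀ k < L.length, P (colourSeq d L k) (letterSeq L k) := by
  intro k hk
  rw [colourSeq_of_lt d hk, letterSeq_of_lt hk]
  exact h _ (List.getElem_mem hk)

lemma cycProd_letterSeq (L : List (ι × A)) : cycProd (letterSeq L) L.length = wordProd L := by
  rw [cycProd, wordProd]
  congr 1
  apply List.ext_getElem (by simp)
  intro k hk _
  simp [letterSeq_of_lt (by simpa using hk : k < L.length)]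

variable [Algebra ℂ A]

lemma wordProd_append_cons_center (φ : A →ₗ[ℂ] ℂ) (P Q : List (ι × A)) (e : ι × A) :
    wordProd (P ++ e :: Q) =
      wordProd (P ++ (e.1, e.2 - φ e.2 • 1) :: Q) + φ e.2 • wordProd (P ++ Q) := by
  simp [sub_mul, mul_sub]

/-- Centering an uncentered letter lowers the weight by one; dropping a letter, or merging
two letters into one, lowers it by at least one. -/
noncomputable def weight (φ : A →ₗ[ℂ] ℂ) (L : List (ι × A)) : ℕ :=
  (L.map fun p => if φ p.2 = 0 then 2 else 3).sum

section Weight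

variable (φ : A →ₗ[ℂ] ℂ)

lemma weight_rotate (L : List (ι × A)) (k : ℕ) : weight φ (L.rotate k) = weight φ L :=
  ((L.rotate_perm k).map _).sum_eq

lemma weight_merge_lt (u v : ι × A) (w : A) (Q : List (ι × A)) :
    weight φ ((u.1, w) :: Q) < weight φ (u :: v :: Q) := by
  simp only [weight, List.map_cons, List.sum_cons]
  split_ifs <;> omega

lemma weight_drop_lt (P Q : List (ι × A)) (e : ι × A) :
    weight φ (P ++ Q) < weight φ (P ++ e :: Q) := by
  simp only [weight, List.map_append, List.map_cons, List.sum_append, List.sum_cons]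
  split_ifs <;> omega

lemma weight_center_lt (hφ1 : φ 1 = 1) (P Q : List (ι × A)) {e : ι × A} (he : φ e.2 ≠ 0) :
    weight φ (P ++ (e.1, e.2 - φ e.2 • 1) :: Q) < weight φ (P ++ e :: Q) := by
  simp [weight, hφ1, he]

end Weight

def IsReducedWord (φ : A →ₗ[ℂ] ℂ) (d : ι) (L : List (ι × A)) : Prop :=
  (∀ p ∈ L, φ p.2 = 0) ∧ CycAlt (colourSeq d L) L.length

end Words

section Vanishing

variable {A : Type*} [Ring A] [Algebra ℂ A] {ι : Type*}
  {B : ι → Subalgebra ℂ A} {φ : A →ₗ[ℂ] ℂ} {ρ : A →ₗ[ℂ] A →ₗ[ℂ] ℂ}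

lemma FirstOrderFree.map_mul_eq_zero (hfree : FirstOrderFree φ B) {i j : ι} (hij : i ≠ j)
    {x y : A} (hx : x ∈ B i) (hy : y ∈ B j) (hφx : φ x = 0) (hφy : φ y = 0) :
    φ (x * y) = 0 := by
  have h := hfree 2 (fun t => if t = 0 then i else j) (fun t => if t = 0 then x else y)
    (by norm_num) ?_ ?_ ?_
  · simpa [cycProd_succ, cycProd_zero] using h
  · intro t ht; interval_cases t <;> simpa
  · intro t ht; interval_cases t <;> simpa
  · intro t ht
    obtain rfl : t = 0 := by omega
    simpa

theorem SecondOrderFree.rho_cycProd_eq_zero (hfree : SecondOrderFree φ ρ B)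
    (hρ1 : ∀ x : A, ρ x 1 = 0) (hρ1' : ∀ x : A, ρ 1 x = 0)
    {n m : ℕ} {ia ib : ℕ → ι} {a b : ℕ → A}
    (ha : ∀ k < n, a k ∈ B (ia k)) (hb : ∀ l < m, b l ∈ B (ib l))
    (hac : ∀ k < n, φ (a k) = 0) (hbc : ∀ l < m, φ (b l) = 0)
    (haAlt : CycAlt ia n) (hbAlt : CycAlt ib m)
    (hfresh : (∃ k < n, ∀ l < m, ib l ≠ ia k) ∨ (∃ l < m, ∀ k < n, ia k ≠ ib l)) :
    ρ (cycProd a n) (cycProd b m) = 0 := by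
  obtain ⟨hfree₁, hlen, hsingle, hpairing⟩ := hfree
  rcases Nat.eq_zero_or_pos n with rfl | hn
  · simp [cycProd_zero, hρ1']
  rcases Nat.eq_zero_or_pos m with rfl | hm
  · simp [cycProd_zero, hρ1]
  rcases ne_or_eq n m with hnm | rfl
  · exact hlen n m ia ib a b hn hm hnm ha hb hac hbc haAlt hbAlt
  have hφab : ∀ k < n, ∀ l < n, ia k ≠ ib l → φ (a k * b l) = 0 := fun k hk l hl h =>
    hfree₁.map_mul_eq_zero h (ha k hk) (hb l hl) (hac k hk) (hbc l hl)
  rcases (show 1 = n ∨ 2 ≤ n by omega) with rfl | hn2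
  · have h0 : ia 0 ≠ ib 0 := by
      rcases hfresh with ⟨k, hk, h⟩ | ⟨l, hl, h⟩
      · obtain rfl : k = 0 := by omega
        exact (h 0 hk).symm
      · obtain rfl : l = 0 := by omega
        exact h 0 hl
    simpa [cycProd_one] using
      hsingle _ _ h0 _ (ha 0 hn) _ (hb 0 hn) (hac 0 hn) (hbc 0 hn)
  rw [hpairing n ia ib a b hn2 ha hb hac hbc haAlt hbAlt]
  refine Finset.sum_eq_zero fun k _ => ?_
  obtain ⟨j, hj, hcol⟩ : ∃ j < n, ia j ≠ ib ((k + (n - 1 - j)) % n) := by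
    rcases hfresh with ⟨j, hj, h⟩ | ⟨l, hl, h⟩
    · exact ⟨j, hj, (h _ (Nat.mod_lt _ hn)).symm⟩
    · refine ⟨(k + (n - 1 - l)) % n, Nat.mod_lt _ hn, ?_⟩
      rw [Nat.reflect_mod_reflect_mod k hl]
      exact h _ (Nat.mod_lt _ hn)
  exact Finset.prod_eq_zero (Finset.mem_range.2 hj) (hφab _ hj _ (Nat.mod_lt _ hn) hcol)

variable [DecidableEq ι] {j : ι} {c cL cM : ℕ}

def Admissible (B : ι → Subalgebra ℂ A) (φ : A →ₗ[ℂ] ℂ) (j : ι) (c : ℕ)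
    (L : List (ι × A)) : Prop :=
  (∀ p ∈ L, p.2 ∈ B p.1) ∧ (L.map Prod.fst).count j = c ∧ ∀ p ∈ L, p.1 = j → φ p.2 = 0

lemma admissible_seqWord {ia : ℕ → ι} {a : ℕ → A} {n : ℕ} (ha : ∀ k < n, a k ∈ B (ia k))
    (hj : ∀ k < n, ia k ≠ j) : Admissible B φ j 0 (seqWord ia a n) := by
  have hcol : ∀ p ∈ seqWord ia a n, p.1 ≠ j := by
    rintro p hp
    obtain ⟨k, hk, rfl⟩ := mem_seqWord.1 hp
    exact hj k hk
  refine ⟨?_, List.count_eq_zero.2 ?_, fun p hp hpj => absurd hpj (hcol p hp)⟩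
  · rintro p hp
    obtain ⟨k, hk, rfl⟩ := mem_seqWord.1 hp
    exact ha k hk
  · intro hjL
    obtain ⟨p, hp, hpj⟩ := List.mem_map.1 hjL
    exact hcol p hp hpj

namespace Admissible

lemma cons_center (hφ1 : φ 1 = 1) {L : List (ι × A)} (hL : Admissible B φ j 0 L)
    {x : A} (hx : x ∈ B j) : Admissible B φ j 1 ((j, x - φ x • 1) :: L) := by
  obtain ⟨hB, hcount, hcent⟩ := hL
  refine ⟨?_, by simpa using hcount, ?_⟩
  · simp only [List.mem_cons, forall_eq_or_imp]
    exact ⟨sub_mem hx (Subalgebra.smul_mem _ (one_mem _) _), hB⟩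
  · simp only [List.mem_cons, forall_eq_or_imp]
    exact ⟨fun _ => by simp [hφ1], hcent⟩

lemma rotate {L : List (ι × A)} (hL : Admissible B φ j c L) (k : ℕ) :
    Admissible B φ j c (L.rotate k) := by
  obtain ⟨hB, hcount, hcent⟩ := hL
  refine ⟨fun p hp => hB p (List.mem_rotate.1 hp), ?_,
    fun p hp => hcent p (List.mem_rotate.1 hp)⟩
  rw [← hcount]
  exact ((L.rotate_perm k).map Prod.fst).count_eq j

lemma merge {u v : ι × A} {Q : List (ι × A)} (hL : Admissible B φ j c (u :: v :: Q))
    (hc : c ≤ 1) (huv : u.1 = v.1) : Admissible B φ j c ((u.1, u.2 * v.2) :: Q) := by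
  obtain ⟨hB, hcount, hcent⟩ := hL
  simp only [List.mem_cons, forall_eq_or_imp] at hB hcent
  have hu : u.1 ≠ j := by
    rintro rfl
    simp [← huv] at hcount
    omega
  refine ⟨?_, ?_, ?_⟩
  · simp only [List.mem_cons, forall_eq_or_imp]
    exact ⟨mul_mem hB.1 (huv ▸ hB.2.1), hB.2.2⟩
  · simpa [List.count_cons, hu, huv ▸ hu] using hcount
  · simp only [List.mem_cons, forall_eq_or_imp]
    exact ⟨fun h => absurd h hu, hcent.2.2⟩

lemma center {P Q : List (ι × A)} {e : ι × A} (hL : Admissible B φ j c (P ++ e :: Q)) :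
    Admissible B φ j c (P ++ (e.1, e.2 - φ e.2 • 1) :: Q) := by
  obtain ⟨hB, hcount, hcent⟩ := hL
  simp only [List.mem_append, List.mem_cons] at hB hcent
  refine ⟨?_, by simpa using hcount, ?_⟩
  · simp only [List.mem_append, List.mem_cons]
    rintro p (hp | rfl | hp)
    · exact hB p (.inl hp)
    · exact sub_mem (hB e (.inr (.inl rfl))) (Subalgebra.smul_mem _ (one_mem _) _)
    · exact hB p (.inr (.inr hp))
  · simp only [List.mem_append, List.mem_cons]
    rintro p (hp | rfl | hp) hpj
    · exact hcent p (.inl hp) hpj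
    · simp [hcent e (.inr (.inl rfl)) hpj]
    · exact hcent p (.inr (.inr hp)) hpj

lemma drop {P Q : List (ι × A)} {e : ι × A} (hL : Admissible B φ j c (P ++ e :: Q))
    (he : φ e.2 ≠ 0) : Admissible B φ j c (P ++ Q) := by
  obtain ⟨hB, hcount, hcent⟩ := hL
  have hej : e.1 ≠ j := fun h => he (hcent e (by simp) h)
  have hsub : P ++ Q ⊆ P ++ e :: Q := ((List.sublist_cons_self e Q).append_left P).subset
  refine ⟨fun p hp => hB p (hsub hp), ?_, fun p hp => hcent p (hsub hp)⟩
  simpa [List.count_cons, hej] using hcount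

theorem apply_wordProd_eq_zero_of_not_isReducedWord {L : List (ι × A)}
    (hL : Admissible B φ j c L) (hc : c ≤ 1) (hφ1 : φ 1 = 1)
    (f : A →ₗ[ℂ] ℂ) (hf : ∀ x y, f (x * y) = f (y * x)) (hred : ¬ IsReducedWord φ j L)
    (ih : ∀ L', Admissible B φ j c L' → weight φ L' < weight φ L → f (wordProd L') = 0) :
    f (wordProd L) = 0 := by
  by_cases hcentered : ∀ p ∈ L, φ p.2 = 0
  · obtain ⟨k, u, v, Q, hrot, huv⟩ := exists_rotate_eq_cons_cons fun h => hred ⟨hcentered, h⟩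
    have hrotL := hL.rotate k
    have hw := weight_merge_lt φ u v (u.2 * v.2) Q
    rw [hrot] at hrotL
    rw [← hrot, weight_rotate] at hw
    rw [← apply_wordProd_rotate f hf L k, hrot, wordProd_cons_cons]
    exact ih _ (hrotL.merge hc huv) hw
  · push Not at hcentered
    obtain ⟨e, he, hφe⟩ := hcentered
    obtain ⟨P, Q, rfl⟩ := List.append_of_mem he
    rw [wordProd_append_cons_center φ, map_add, map_smul,
      ih _ hL.center (weight_center_lt φ hφ1 P Q hφe),
      ih _ (hL.drop hφe) (weight_drop_lt φ P Q e), smul_zero, add_zero]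

end Admissible

theorem SecondOrderFree.rho_wordProd_eq_zero_of_isReducedWord (hfree : SecondOrderFree φ ρ B)
    (hρ1 : ∀ x : A, ρ x 1 = 0) (hρ1' : ∀ x : A, ρ 1 x = 0) (hc : cL + cM = 1)
    {L M : List (ι × A)} (hL : Admissible B φ j cL L) (hM : Admissible B φ j cM M)
    (hLred : IsReducedWord φ j L) (hMred : IsReducedWord φ j M) :
    ρ (wordProd L) (wordProd M) = 0 := by
  obtain ⟨hLB, hLcount, -⟩ := hL
  obtain ⟨hMB, hMcount, -⟩ := hM
  rw [← cycProd_letterSeq L, ← cycProd_letterSeq M]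
  refine hfree.rho_cycProd_eq_zero hρ1 hρ1'
    (forall_lt_length_seq (P := fun i x => x ∈ B i) j hLB)
    (forall_lt_length_seq (P := fun i x => x ∈ B i) j hMB)
    (forall_lt_length_seq (P := fun _ x => φ x = 0) j hLred.1)
    (forall_lt_length_seq (P := fun _ x => φ x = 0) j hMred.1) hLred.2 hMred.2 ?_
  rcases (by omega : cL = 1 ∧ cM = 0 ∨ cL = 0 ∧ cM = 1) with ⟨rfl, rfl⟩ | ⟨rfl, rfl⟩
  · obtain ⟨k, hk, hkj⟩ :=
      exists_colourSeq_eq_of_mem j (List.count_pos_iff.1 (by rw [hLcount]; norm_num))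
    refine .inl ⟨k, hk, fun l hl => ?_⟩
    rw [hkj]
    exact colourSeq_ne_of_not_mem j (List.count_eq_zero.1 hMcount) hl
  · obtain ⟨l, hl, hlj⟩ :=
      exists_colourSeq_eq_of_mem j (List.count_pos_iff.1 (by rw [hMcount]; norm_num))
    refine .inr ⟨l, hl, fun k hk => ?_⟩
    rw [hlj]
    exact colourSeq_ne_of_not_mem j (List.count_eq_zero.1 hLcount) hk

theorem SecondOrderFree.rho_wordProd_eq_zero (hfree : SecondOrderFree φ ρ B) (hφ1 : φ 1 = 1)
    (hρtr1 : ∀ x y z : A, ρ (x * y) z = ρ (y * x) z)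
    (hρtr2 : ∀ x y z : A, ρ x (y * z) = ρ x (z * y))
    (hρ1 : ∀ x : A, ρ x 1 = 0) (hρ1' : ∀ x : A, ρ 1 x = 0) (hc : cL + cM = 1)
    {L M : List (ι × A)} (hL : Admissible B φ j cL L) (hM : Admissible B φ j cM M) :
    ρ (wordProd L) (wordProd M) = 0 := by
  induction hw : weight φ L + weight φ M using Nat.strong_induction_on generalizing L M with
  | _ N ih =>
  by_cases hLred : IsReducedWord φ j L
  · by_cases hMred : IsReducedWord φ j M
    · exact hfree.rho_wordProd_eq_zero_of_isReducedWord hρ1 hρ1' hc hL hM hLred hMred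
    · exact hM.apply_wordProd_eq_zero_of_not_isReducedWord (by omega) hφ1 (ρ (wordProd L))
        (hρtr2 _) hMred fun M' hM' hw' => ih _ (by omega) hL hM' rfl
  · exact hL.apply_wordProd_eq_zero_of_not_isReducedWord (by omega) hφ1 (ρ.flip (wordProd M))
      (fun x y => hρtr1 x y _) hLred fun L' hL' hw' => ih _ (by omega) hL' hM rfl

theorem SecondOrderFree.rho_cycProd_eq_phi_mul_left (hfree : SecondOrderFree φ ρ B)
    (hφ1 : φ 1 = 1) (hρtr1 : ∀ x y z : A, ρ (x * y) z = ρ (y * x) z)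
    (hρtr2 : ∀ x y z : A, ρ x (y * z) = ρ x (z * y))
    (hρ1 : ∀ x : A, ρ x 1 = 0) (hρ1' : ∀ x : A, ρ 1 x = 0)
    {n m : ℕ} {ia ib : ℕ → ι} {a b : ℕ → A}
    (ha : ∀ k < n, a k ∈ B (ia k)) (hb : ∀ l < m, b l ∈ B (ib l))
    (hia : ∀ k, 1 ≤ k → k < n → ia k ≠ ia 0) (hib : ∀ l < m, ib l ≠ ia 0) :
    ρ (cycProd a n) (cycProd b m) =
      φ (a 0) * ρ (cycProd (fun k => a (k + 1)) (n - 1)) (cycProd b m) := by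
  cases n with
  | zero => simp [cycProd_zero, hρ1']
  | succ n =>
    have hL := (admissible_seqWord (φ := φ) (fun k (hk : k < n) => ha (k + 1) (by omega))
      fun k (hk : k < n) => hia (k + 1) (by omega) (by omega)).cons_center hφ1 (ha 0 (by omega))
    have hM := admissible_seqWord (φ := φ) hb hib
    have h0 := hfree.rho_wordProd_eq_zero hφ1 hρtr1 hρtr2 hρ1 hρ1' (by norm_num) hL hM
    rw [Nat.add_sub_cancel, ← wordProd_seqWord ia a,
      ← wordProd_seqWord (fun k => ia (k + 1)) (fun k => a (k + 1)), ← wordProd_seqWord ib,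
      seqWord_succ, ← List.nil_append (_ :: _),
      wordProd_append_cons_center φ, List.nil_append, List.nil_append, map_add, map_smul,
      LinearMap.add_apply, h0, LinearMap.smul_apply, zero_add, smul_eq_mul]

theorem SecondOrderFree.rho_cycProd_eq_phi_mul_right (hfree : SecondOrderFree φ ρ B)
    (hφ1 : φ 1 = 1) (hρtr1 : ∀ x y z : A, ρ (x * y) z = ρ (y * x) z)
    (hρtr2 : ∀ x y z : A, ρ x (y * z) = ρ x (z * y))
    (hρ1 : ∀ x : A, ρ x 1 = 0) (hρ1' : ∀ x : A, ρ 1 x = 0)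
    {n m : ℕ} {ia ib : ℕ → ι} {a b : ℕ → A}
    (ha : ∀ k < n, a k ∈ B (ia k)) (hb : ∀ l < m, b l ∈ B (ib l))
    (hib : ∀ l, 1 ≤ l → l < m → ib l ≠ ib 0) (hia : ∀ k < n, ia k ≠ ib 0) :
    ρ (cycProd a n) (cycProd b m) =
      φ (b 0) * ρ (cycProd a n) (cycProd (fun l => b (l + 1)) (m - 1)) := by
  cases m with
  | zero => simp [cycProd_zero, hρ1]
  | succ m =>
    have hL := admissible_seqWord (φ := φ) ha hia
    have hM := (admissible_seqWord (φ := φ) (fun l (hl : l < m) => hb (l + 1) (by omega))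
      fun l (hl : l < m) => hib (l + 1) (by omega) (by omega)).cons_center hφ1 (hb 0 (by omega))
    have h0 := hfree.rho_wordProd_eq_zero hφ1 hρtr1 hρtr2 hρ1 hρ1' (by norm_num) hL hM
    rw [Nat.add_sub_cancel, ← wordProd_seqWord ib b,
      ← wordProd_seqWord (fun l => ib (l + 1)) (fun l => b (l + 1)), ← wordProd_seqWord ia,
      seqWord_succ, ← List.nil_append (_ :: _), wordProd_append_cons_center φ, List.nil_append,
      List.nil_append, map_add, map_smul, h0, zero_add, smul_eq_mul]

end Vanishing

theorem second_order_free_singleton_factor_general {A : Type*} [Ring A] [Algebra ℂ A] {ι : Type*}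
    (φ : A →ₗ[ℂ] ℂ) (ρ : A →ₗ[ℂ] A →ₗ[ℂ] ℂ)
    (hφ1 : φ 1 = 1)
    (hρtr1 : ∀ x y z : A, ρ (x * y) z = ρ (y * x) z)
    (hρtr2 : ∀ x y z : A, ρ x (y * z) = ρ x (z * y))
    (hρ1 : ∀ x : A, ρ x 1 = 0) (hρ1' : ∀ x : A, ρ 1 x = 0)
    (B : ι → Subalgebra ℂ A)
    (hfree : SecondOrderFree φ ρ B)
    (n m : ℕ)
    (ia ib : ℕ → ι) (a b : ℕ → A)
    (ha : ∀ k < n, a k ∈ B (ia k)) (hb : ∀ l < m, b l ∈ B (ib l)) :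
    ((∀ k, 1 ≤ k → k < n → ia k ≠ ia 0) → (∀ l < m, ib l ≠ ia 0) →
      ρ (cycProd a n) (cycProd b m) =
        φ (a 0) * ρ (cycProd (fun k => a (k + 1)) (n - 1)) (cycProd b m)) ∧
    ((∀ l, 1 ≤ l → l < m → ib l ≠ ib 0) → (∀ k < n, ia k ≠ ib 0) →
      ρ (cycProd a n) (cycProd b m) =
        φ (b 0) * ρ (cycProd a n) (cycProd (fun l => b (l + 1)) (m - 1))) := by
  classical
  exact ⟨hfree.rho_cycProd_eq_phi_mul_left hφ1 hρtr1 hρtr2 hρ1 hρ1' ha hb,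
    hfree.rho_cycProd_eq_phi_mul_right hφ1 hρtr1 hρtr2 hρ1 hρ1' ha hb⟩

/-- in a second order non-commutative probability space with
subalgebras free of second order, a subalgebra that occurs only once can be pulled
out of `ρ`:  `ρ(a_1⋯a_n, b_1⋯b_m) = φ(a_1) ρ(a_2⋯a_n, b_1⋯b_m)` when the
subalgebra of `a_1` appears only once, and symmetrically for `b_1`. -/
theorem second_order_free_singleton_factor {A : Type*} [Ring A] [Algebra ℂ A] {ι : Type*}
    (φ : A →ₗ[ℂ] ℂ) (ρ : A →ₗ[ℂ] A →ₗ[ℂ] ℂ)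
    (hφ1 : φ 1 = 1) (hφtr : ∀ x y : A, φ (x * y) = φ (y * x))
    (hρtr1 : ∀ x y z : A, ρ (x * y) z = ρ (y * x) z)
    (hρtr2 : ∀ x y z : A, ρ x (y * z) = ρ x (z * y))
    (hρ1 : ∀ x : A, ρ x 1 = 0) (hρ1' : ∀ x : A, ρ 1 x = 0)
    (B : ι → Subalgebra ℂ A)
    (hfree : SecondOrderFree φ ρ B)
    (n m : ℕ) (hn : 1 ≤ n) (hm : 1 ≤ m)
    (ia ib : ℕ → ι) (a b : ℕ → A)
    (ha : ∀ k < n, a k ∈ B (ia k)) (hb : ∀ l < m, b l ∈ B (ib l))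
    (haAlt : CycAlt ia n) (hbAlt : CycAlt ib m) :
    ((∀ k, 1 ≤ k → k < n → ia k ≠ ia 0) → (∀ l < m, ib l ≠ ia 0) →
      ρ (cycProd a n) (cycProd b m) =
        φ (a 0) * ρ (cycProd (fun k => a (k + 1)) (n - 1)) (cycProd b m)) ∧
    ((∀ l, 1 ≤ l → l < m → ib l ≠ ib 0) → (∀ k < n, ia k ≠ ib 0) →
      ρ (cycProd a n) (cycProd b m) =
        φ (b 0) * ρ (cycProd a n) (cycProd (fun l => b (l + 1)) (m - 1))) :=
  second_order_free_singleton_factor_general φ ρ hφ1 hρtr1 hρtr2 hρ1 hρ1' B hfree n m ia ib a b ha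
    hb
end
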